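/- Let M > 1, q > 0 and n > -2 be real numbers, and let C = {s ∈ ℝ : |s - (n - s)| ≤ q, 0 ≤ s + 1 ≤ M, and 0 ≤ n + 1 - s ≤ M}. Then ∫_C C(M-1, s)·C(M-1, n-s) ds ≥ ∫_C C(M, s+1)·C(M-2, n-s-1) ds. -/

import Mathlib

/-!
By Pascal's rule `C(M, s+1) = C(M-1, s) + C(M-1, s+1)`, the difference of the two integrands is
the forward difference `Φ(s) - Φ(s+1)` of `Φ(s) = C(M-1, s)·C(M-2, n-s)`. The constraint set is
an interval `[c, n-c]`, so the integral telescopes to `∫_c^{c+1} (Φ(s) - Φ(n+1-s)) ds`. This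
integrand is odd about `(n+1)/2`, and by the functional equation of `Γ` it equals a product of
nonnegative factors with `(n + 1 - 2s)` to the left of `(n+1)/2`; hence the integral is `≥ 0`.
-/

open Real MeasureTheory Set

/-- Generalized binomial coefficient `C(M,s) = Γ(M+1)/(Γ(s+1)·Γ(M-s+1))`. -/
noncomputable def genBinom (M s : ℝ) : ℝ :=
  Real.Gamma (M + 1) / (Real.Gamma (s + 1) * Real.Gamma (M - s + 1))

namespace Real

theorem inv_Gamma_eq_mul_inv_Gamma_add_one (x : ℝ) :
    (Gamma x)⁻¹ = x * (Gamma (x + 1))⁻¹ := by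
  rcases eq_or_ne x 0 with rfl | hx
  · simp
  · rw [Gamma_add_one hx, mul_inv, ← mul_assoc, mul_inv_cancel₀ hx, one_mul]

theorem continuous_inv_Gamma : Continuous fun x : ℝ => (Gamma x)⁻¹ := by
  have h (x : ℝ) : (Gamma x)⁻¹ = ((Complex.Gamma x)⁻¹).re := by
    rw [Complex.Gamma_ofReal, ← Complex.ofReal_inv, Complex.ofReal_re]
  simp only [h]
  exact Complex.continuous_re.comp
    (Complex.differentiable_one_div_Gamma.continuous.comp Complex.continuous_ofReal)

end Real

theorem genBinom_eq_mul_inv (M s : ℝ) :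
    genBinom M s = Gamma (M + 1) * (Gamma (s + 1))⁻¹ * (Gamma (M - s + 1))⁻¹ := by
  rw [genBinom, div_eq_mul_inv, mul_inv, ← mul_assoc]

@[fun_prop]
theorem continuous_genBinom (M : ℝ) : Continuous (genBinom M) := by
  simp only [funext (genBinom_eq_mul_inv M)]
  exact (continuous_const.mul (Real.continuous_inv_Gamma.comp (by fun_prop))).mul
    (Real.continuous_inv_Gamma.comp (by fun_prop))

theorem genBinom_eq_add {M : ℝ} (hM : M ≠ 0) (s : ℝ) :
    genBinom M s = genBinom (M - 1) (s - 1) + genBinom (M - 1) s := by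
  simp only [genBinom_eq_mul_inv, sub_add_cancel, show M - 1 - (s - 1) + 1 = M - s + 1 by ring,
    show M - 1 - s + 1 = M - s by ring, Real.inv_Gamma_eq_mul_inv_Gamma_add_one s,
    Real.inv_Gamma_eq_mul_inv_Gamma_add_one (M - s), Real.Gamma_add_one hM]
  ring

noncomputable def pascalPotential (M n s : ℝ) : ℝ :=
  genBinom (M - 1) s * genBinom (M - 2) (n - s)

@[fun_prop]
theorem continuous_pascalPotential (M n : ℝ) : Continuous (pascalPotential M n) := by
  unfold pascalPotential
  fun_prop

theorem genBinom_mul_sub_genBinom_mul_eq {M : ℝ} (hM₀ : M ≠ 0) (hM₁ : M ≠ 1) (n s : ℝ) :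
    genBinom (M - 1) s * genBinom (M - 1) (n - s) -
        genBinom M (s + 1) * genBinom (M - 2) (n - s - 1)
      = pascalPotential M n s - pascalPotential M n (s + 1) := by
  rw [genBinom_eq_add hM₀ (s + 1), genBinom_eq_add (sub_ne_zero.2 hM₁) (n - s)]
  simp only [pascalPotential, add_sub_cancel_right, show M - 1 - 1 = M - 2 by ring,
    show n - (s + 1) = n - s - 1 by ring]
  ring

theorem pascalPotential_sub_reflect (M n s : ℝ) :
    pascalPotential M n s - pascalPotential M n (n + 1 - s) =
      Gamma M * Gamma (M - 1) * ((M - n + s - 1) * (n + 1 - 2 * s)) *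
        ((Gamma (s + 1))⁻¹ * (Gamma (M - s))⁻¹ * (Gamma (n - s + 2))⁻¹ *
          (Gamma (M - n + s))⁻¹) := by
  have h₁ : (Gamma (n - s + 1))⁻¹ = (n - s + 1) * (Gamma (n - s + 2))⁻¹ := by
    rw [Real.inv_Gamma_eq_mul_inv_Gamma_add_one, add_assoc, one_add_one_eq_two]
  have h₂ : (Gamma (M - n + s - 1))⁻¹ = (M - n + s - 1) * (Gamma (M - n + s))⁻¹ := by
    rw [Real.inv_Gamma_eq_mul_inv_Gamma_add_one, sub_add_cancel]
  simp only [pascalPotential, genBinom_eq_mul_inv, show M - 1 + 1 = M by ring,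
    show M - 2 + 1 = M - 1 by ring, show M - 1 - s + 1 = M - s by ring,
    show M - 2 - (n - s) + 1 = M - n + s - 1 by ring, show n + 1 - s + 1 = n - s + 2 by ring,
    show M - 1 - (n + 1 - s) + 1 = M - n + s - 1 by ring, show n - (n + 1 - s) + 1 = s by ring,
    show M - 2 - (n - (n + 1 - s)) + 1 = M - s by ring, h₁, h₂,
    Real.inv_Gamma_eq_mul_inv_Gamma_add_one s]
  ring

theorem pascalPotential_sub_reflect_nonneg {M n s : ℝ} (hM : 1 ≤ M) (hs₁ : -1 ≤ s)
    (hs₂ : n + 1 - M ≤ s) (hs₃ : s ≤ (n + 1) / 2) :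
    0 ≤ pascalPotential M n s - pascalPotential M n (n + 1 - s) := by
  have hΓ {x : ℝ} (hx : 0 ≤ x) : 0 ≤ (Gamma x)⁻¹ :=
    inv_nonneg.2 (Real.Gamma_nonneg_of_nonneg hx)
  rw [pascalPotential_sub_reflect]
  refine mul_nonneg (mul_nonneg ?_ (mul_nonneg ?_ ?_)) (mul_nonneg (mul_nonneg (mul_nonneg
    (hΓ ?_) (hΓ ?_)) (hΓ ?_)) (hΓ ?_))
  · exact mul_nonneg (Real.Gamma_nonneg_of_nonneg (by linarith))
      (Real.Gamma_nonneg_of_nonneg (by linarith))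
  all_goals linarith

namespace intervalIntegral

theorem integral_sub_comp_add_one {F : ℝ → ℝ} (hF : Continuous F) (a b : ℝ) :
    ∫ s in a..b, (F s - F (s + 1)) = ∫ s in a..a + 1, (F s - F (a + b + 1 - s)) := by
  have hI (x y : ℝ) : IntervalIntegrable F volume x y := hF.intervalIntegrable x y
  rw [integral_sub (hI a b) (Continuous.intervalIntegrable (by fun_prop) a b),
    integral_sub (hI a (a + 1)) (Continuous.intervalIntegrable (by fun_prop) a (a + 1)),
    integral_comp_add_right F, integral_comp_sub_left F,
    integral_interval_sub_interval_comm (hI _ _) (hI _ _) (hI _ _)]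
  congr 2 <;> ring

theorem integral_sub_comp_sub_self_eq_zero {F : ℝ → ℝ} (hF : Continuous F) (r b : ℝ) :
    ∫ s in r - b..b, (F s - F (r - s)) = 0 := by
  rw [integral_sub (hF.intervalIntegrable _ _) (Continuous.intervalIntegrable (by fun_prop) _ _),
    integral_comp_sub_left F, sub_sub_cancel, sub_self]

theorem integral_sub_comp_sub_nonneg {F : ℝ → ℝ} (hF : Continuous F) {r a b : ℝ}
    (hab : a ≤ b) (hbr : b ≤ r - a) (hpos : ∀ s ∈ Icc a (r / 2), 0 ≤ F s - F (r - s)) :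
    0 ≤ ∫ s in a..b, (F s - F (r - s)) := by
  rcases le_or_gt b (r / 2) with hb | hb
  · exact integral_nonneg hab fun s hs => hpos s ⟨hs.1, hs.2.trans hb⟩
  have hG : Continuous fun s => F s - F (r - s) := by fun_prop
  rw [← integral_add_adjacent_intervals (b := r - b) (hG.intervalIntegrable _ _)
    (hG.intervalIntegrable _ _), integral_sub_comp_sub_self_eq_zero hF, add_zero]
  exact integral_nonneg (by linarith) fun s hs => hpos s ⟨hs.1, by linarith [hs.2]⟩

end intervalIntegral

theorem setOf_constraints_eq_Icc (M q n : ℝ) :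
    {s : ℝ | |s - (n - s)| ≤ q ∧ 0 ≤ s + 1 ∧ s + 1 ≤ M ∧
      0 ≤ n + 1 - s ∧ n + 1 - s ≤ M} =
      Icc (max (max ((n - q) / 2) (-1)) (n + 1 - M))
        (n - max (max ((n - q) / 2) (-1)) (n + 1 - M)) := by
  ext s
  simp only [mem_ofPred_eq, mem_Icc, abs_le, le_sub_comm (a := s), max_le_iff]
  constructor <;> intro h <;> casesm* _ ∧ _ <;> and_intros <;> linarith

theorem genBinom_integral_ineq_C_general
    (M q n : ℝ) (hM : 1 < M)
    (C : Set ℝ)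
    (hC : C = {s : ℝ | |s - (n - s)| ≤ q ∧ 0 ≤ s + 1 ∧ s + 1 ≤ M ∧
      0 ≤ n + 1 - s ∧ n + 1 - s ≤ M}) :
    (∫ s in C, genBinom M (s + 1) * genBinom (M - 2) (n - s - 1)) ≤
      ∫ s in C, genBinom (M - 1) s * genBinom (M - 1) (n - s) := by
  set c := max (max ((n - q) / 2) (-1)) (n + 1 - M) with hc
  rw [hC, setOf_constraints_eq_Icc, ← hc]
  rcases lt_or_ge (n - c) c with hempty | hcn
  · simp [Icc_eq_empty_of_lt hempty]
  rw [integral_Icc_eq_integral_Ioc, integral_Icc_eq_integral_Ioc,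
    ← intervalIntegral.integral_of_le hcn, ← intervalIntegral.integral_of_le hcn,
    ← sub_nonneg,
    ← intervalIntegral.integral_sub (Continuous.intervalIntegrable (by fun_prop) _ _)
      (Continuous.intervalIntegrable (by fun_prop) _ _)]
  simp only [genBinom_mul_sub_genBinom_mul_eq (by linarith : M ≠ 0) hM.ne']
  rw [intervalIntegral.integral_sub_comp_add_one (continuous_pascalPotential M n),
    show c + (n - c) + 1 = n + 1 by ring]
  have hc₁ : -1 ≤ c := le_max_of_le_left (le_max_right _ _)
  have hc₂ : n + 1 - M ≤ c := le_max_right _ _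
  exact intervalIntegral.integral_sub_comp_sub_nonneg (continuous_pascalPotential M n)
    (by linarith) (by linarith) fun s hs =>
      pascalPotential_sub_reflect_nonneg hM.le (hc₁.trans hs.1) (hc₂.trans hs.1) hs.2

theorem genBinom_integral_ineq_C
    (M q n : ℝ) (hM : 1 < M) (hq : 0 < q) (hn : -2 < n)
    (C : Set ℝ)
    (hC : C = {s : ℝ | |s - (n - s)| ≤ q ∧ 0 ≤ s + 1 ∧ s + 1 ≤ M ∧
      0 ≤ n + 1 - s ∧ n + 1 - s ≤ M}) :
    (∫ s in C, genBinom M (s + 1) * genBinom (M - 2) (n - s - 1)) ≤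
      ∫ s in C, genBinom (M - 1) s * genBinom (M - 1) (n - s) :=
  genBinom_integral_ineq_C_general M q n hM C hC
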